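/- Let ε ∈ (0,1), let x, y ∈ ℝ, let k ∈ {1,2}, and let s : ℂ → ℂ be any function satisfying s(z)² = z³ + (ε² + ε⁻²)z² + z for all z ∈ ℂ. Then the function z ↦ (y+1)·log|z| − log|z−1| + (1/2 − x)·log|r_{ε,k}(z; s(z))| − y·log|z| is bounded as |z| → ∞; that is, Re ψ_{ε,k}(z; x, y) = y·log|z| + O(1) along the cobounded filter on ℂ. -/

import Mathlib

open Complex Filter Asymptotics

/-- `r_{ε,1}(z;s) = ((z+1)² + 2z(ε² + ε⁻²) + 2(ε + ε⁻¹)s)/(z−1)²`. -/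
noncomputable def r1 (ε : ℝ) (z s : ℂ) : ℂ :=
  ((z + 1)^2 + 2 * z * ((ε : ℂ)^2 + ((ε : ℂ)^2)⁻¹) + 2 * ((ε : ℂ) + (ε : ℂ)⁻¹) * s) / (z - 1)^2

/-- `r_{ε,2}(z;s) = ((z+1)² + 2z(ε² + ε⁻²) − 2(ε + ε⁻¹)s)/(z−1)²`. -/
noncomputable def r2 (ε : ℝ) (z s : ℂ) : ℂ :=
  ((z + 1)^2 + 2 * z * ((ε : ℂ)^2 + ((ε : ℂ)^2)⁻¹) - 2 * ((ε : ℂ) + (ε : ℂ)⁻¹) * s) / (z - 1)^2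

/-- `Re ψ_{ε,k}(z; x, y) − y·log|z|` is bounded as `|z| → ∞`: the function
`z ↦ (y+1)log|z| − log|z−1| + (1/2 − x)log|r_{ε,k}(z; s(z))| − y·log|z|` is `O(1)` along the
cobounded filter on `ℂ`, for `k ∈ {1,2}`. -/
theorem stmt10 (ε : ℝ) (hε : ε ∈ Set.Ioo (0 : ℝ) 1) (x y : ℝ) (k : ℕ) (hk : k = 1 ∨ k = 2)
    (s : ℂ → ℂ)
    (hs : ∀ z : ℂ, s z ^ 2 = z^3 + ((ε : ℂ)^2 + ((ε : ℂ)^2)⁻¹) * z^2 + z) :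
    (fun z : ℂ =>
        (y + 1) * Real.log (‖z‖) - Real.log (‖z - 1‖)
          + (1/2 - x) * Real.log (‖if k = 1 then r1 ε z (s z) else r2 ε z (s z)‖)
          - y * Real.log (‖z‖))
      =O[Bornology.cobounded ℂ] (fun _ => (1 : ℝ)) := by
  obtain ⟨hε0, hε1⟩ := hε
  have hεC : (ε : ℂ) ≠ 0 := Complex.ofReal_ne_zero.2 (ne_of_gt hε0)
  set A : ℂ := (ε : ℂ)^2 + ((ε : ℂ)^2)⁻¹ with hA
  set B : ℂ := (ε : ℂ) + (ε : ℂ)⁻¹ with hB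
  have hB2 : B^2 = A + 2 := by
    rw [hB, hA]; field_simp; ring
  set l := Bornology.cobounded ℂ with hl
  have habs : Tendsto (fun z : ℂ => ‖z‖) l atTop := by
    simpa using tendsto_norm_cobounded_atTop (E := ℂ)
  have hinv : Tendsto (fun z : ℂ => z⁻¹) l (nhds 0) :=
    Filter.tendsto_inv₀_cobounded
  -- basic eventual facts
  have hev : ∀ᶠ z : ℂ in l, 2 ≤ ‖z‖ := habs.eventually_ge_atTop 2
  have hbasic : ∀ᶠ z : ℂ in l, z ≠ 0 ∧ z - 1 ≠ 0 ∧ 1 - z⁻¹ ≠ 0 := by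
    filter_upwards [hev] with z hz
    have hz0 : z ≠ 0 := by
      intro h; rw [h] at hz; simp at hz; linarith
    have hz1 : z - 1 ≠ 0 := by
      intro h
      have : z = 1 := by linear_combination h
      rw [this] at hz; simp at hz
    refine ⟨hz0, hz1, ?_⟩
    intro h
    have : z⁻¹ = 1 := by linear_combination -h
    have := congrArg (‖·‖) this
    rw [norm_inv] at this
    simp at this
    rw [this] at hz; linarith
  -- the product identity
  have key : ∀ z : ℂ, r1 ε z (s z) * r2 ε z (s z)
      = (z-1)^4 / (z-1)^4 := by
    intro z
    have hQ : (2*B*(s z))^2 = 4*(A+2)*(z^3 + A*z^2 + z) := by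
      linear_combination (4*B^2) * hs z + (4*(z^3 + A*z^2 + z)) * hB2
    rw [r1, r2, ← hA, ← hB, div_mul_div_comm]
    have hd : (z-1)^2 * (z-1)^2 = (z-1)^4 := by ring
    rw [hd]
    congr 1
    linear_combination -hQ
  -- limits via composition with z⁻¹
  have hcomp : ∀ (F : ℂ → ℂ), ContinuousAt F 0 →
      Tendsto (fun z : ℂ => F z⁻¹) l (nhds (F 0)) := fun F hF => hF.tendsto.comp hinv
  -- limit of z/(z-1)
  have hq1 : Tendsto (fun z : ℂ => z / (z-1)) l (nhds 1) := by
    have hF : ContinuousAt (fun u : ℂ => 1 / (1 - u)) 0 := by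
      apply ContinuousAt.div
      · fun_prop
      · fun_prop
      · norm_num
    have := hcomp _ hF
    simp only [sub_zero, div_one] at this
    refine this.congr' ?_
    filter_upwards [hbasic] with z ⟨hz0, hz1, hu1⟩
    rw [div_eq_div_iff hu1 hz1]
    field_simp
  -- r1 * r2 = 1 eventually
  have hq2 : ∀ᶠ z : ℂ in l, r1 ε z (s z) * r2 ε z (s z) = 1 := by
    filter_upwards [hbasic] with z ⟨hz0, hz1, hu1⟩
    rw [key z, div_self (pow_ne_zero _ hz1)]
  -- limit of s²/(z-1)⁴
  have hq3 : Tendsto (fun z : ℂ => (s z)^2 / (z-1)^4) l (nhds 0) := by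
    have hF : ContinuousAt (fun u : ℂ => (u + A*u^2 + u^3) / (1 - u)^4) 0 := by
      apply ContinuousAt.div
      · fun_prop
      · fun_prop
      · norm_num
    have := hcomp _ hF
    norm_num at this
    refine this.congr' ?_
    filter_upwards [hbasic] with z ⟨hz0, hz1, hu1⟩
    rw [hs z, div_eq_div_iff (pow_ne_zero _ hu1) (pow_ne_zero _ hz1)]
    field_simp
  -- limit of ((z+1)²+2Az)/(z-1)²
  have hq4 : Tendsto (fun z : ℂ => ((z+1)^2 + 2*z*A) / (z-1)^2) l (nhds 1) := by
    have hF : ContinuousAt (fun u : ℂ => ((1+u)^2 + 2*A*u) / (1 - u)^2) 0 := by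
      apply ContinuousAt.div
      · fun_prop
      · fun_prop
      · norm_num
    have := hcomp _ hF
    norm_num at this
    refine this.congr' ?_
    filter_upwards [hbasic] with z ⟨hz0, hz1, hu1⟩
    rw [div_eq_div_iff (pow_ne_zero _ hu1) (pow_ne_zero _ hz1)]
    field_simp
  -- |s|/|z-1|² → 0
  have hq3' : Tendsto (fun z : ℂ => ‖s z‖ / ‖z-1‖^2) l (nhds 0) := by
    have h1 : Tendsto (fun z : ℂ => ‖s z‖^2 / ‖z-1‖^4) l (nhds 0) := by
      have h0 := (continuous_norm.tendsto 0).comp hq3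
      rw [norm_zero] at h0
      refine h0.congr fun z => ?_
      simp [Function.comp, norm_div, norm_pow]
    have h2 := (Real.continuous_sqrt.tendsto 0).comp h1
    rw [Real.sqrt_zero] at h2
    refine h2.congr ?_
    intro z
    simp only [Function.comp_apply, norm_div, norm_pow]
    have hb : ‖z-1‖^4 = (‖z-1‖^2)^2 := by ring
    rw [hb, Real.sqrt_div (sq_nonneg _), Real.sqrt_sq (norm_nonneg _),
      Real.sqrt_sq (sq_nonneg _)]
  -- upper bound function
  set M : ℂ → ℝ := fun z => ‖(z+1)^2 + 2*z*A‖ / ‖z-1‖^2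
      + ‖2*B‖ * (‖s z‖ / ‖z-1‖^2) with hM
  have hMt : Tendsto M l (nhds 1) := by
    have h4 : Tendsto (fun z : ℂ => ‖(z+1)^2 + 2*z*A‖ / ‖z-1‖^2)
        l (nhds 1) := by
      have h0 := (continuous_norm.tendsto 1).comp hq4
      rw [norm_one] at h0
      refine h0.congr fun z => ?_
      simp [Function.comp, norm_div, norm_pow]
    have h5 := h4.add ((tendsto_const_nhds (x := ‖2*B‖)).mul hq3')
    rw [show (1:ℝ) + ‖2*B‖ * 0 = 1 by ring] at h5
    rw [hM]; exact h5
  have hub : ∀ᶠ z : ℂ in l, ‖r1 ε z (s z)‖ ≤ M z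
      ∧ ‖r2 ε z (s z)‖ ≤ M z := by
    filter_upwards [hbasic] with z ⟨hz0, hz1, hu1⟩
    have hd : (0:ℝ) ≤ ‖z-1‖^2 := (pow_pos (norm_pos_iff.2 hz1) 2).le
    constructor
    · rw [r1, ← hA, ← hB, norm_div, norm_pow]
      have tri : ‖(z+1)^2 + 2*z*A + 2*B*(s z)‖
          ≤ ‖(z+1)^2 + 2*z*A‖ + ‖2*B‖ * ‖s z‖ := by
        refine (norm_add_le _ _).trans ?_
        rw [norm_mul]
      calc ‖(z+1)^2 + 2*z*A + 2*B*(s z)‖ / ‖z-1‖^2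
          ≤ (‖(z+1)^2 + 2*z*A‖ + ‖2*B‖ * ‖s z‖)
              / ‖z-1‖^2 := by gcongr
        _ = M z := by simp only [hM]; ring
    · rw [r2, ← hA, ← hB, norm_div, norm_pow]
      have tri : ‖(z+1)^2 + 2*z*A - 2*B*(s z)‖
          ≤ ‖(z+1)^2 + 2*z*A‖ + ‖2*B‖ * ‖s z‖ := by
        refine (norm_sub_le _ _).trans ?_
        rw [norm_mul]
      calc ‖(z+1)^2 + 2*z*A - 2*B*(s z)‖ / ‖z-1‖^2
          ≤ (‖(z+1)^2 + 2*z*A‖ + ‖2*B‖ * ‖s z‖)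
              / ‖z-1‖^2 := by gcongr
        _ = M z := by simp only [hM]; ring
  -- eventual two-sided bounds on |r1|, |r2|
  have hbound : ∀ᶠ z : ℂ in l, ((1:ℝ)/2 ≤ ‖r1 ε z (s z)‖
      ∧ ‖r1 ε z (s z)‖ ≤ 2)
      ∧ ((1:ℝ)/2 ≤ ‖r2 ε z (s z)‖ ∧ ‖r2 ε z (s z)‖ ≤ 2) := by
    have hM2 : ∀ᶠ z : ℂ in l, M z < 2 :=
      hMt.eventually (gt_mem_nhds (by norm_num : (1:ℝ) < 2))
    filter_upwards [hub, hM2, hq2] with z ⟨h1, h2⟩ hM2 hprod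
    have habsprod : ‖r1 ε z (s z)‖ * ‖r2 ε z (s z)‖ = 1 := by
      rw [← norm_mul, hprod, norm_one]
    have ha1 : (0:ℝ) ≤ ‖r1 ε z (s z)‖ := norm_nonneg _
    have ha2 : (0:ℝ) ≤ ‖r2 ε z (s z)‖ := norm_nonneg _
    have hb1 : ‖r1 ε z (s z)‖ ≤ 2 := h1.trans hM2.le
    have hb2 : ‖r2 ε z (s z)‖ ≤ 2 := h2.trans hM2.le
    refine ⟨⟨?_, hb1⟩, ⟨?_, hb2⟩⟩
    · nlinarith
    · nlinarith
  -- the chosen branch is bounded between 1/2 and 2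
  have hbk : ∀ᶠ z : ℂ in l,
      (1:ℝ)/2 ≤ ‖if k = 1 then r1 ε z (s z) else r2 ε z (s z)‖
      ∧ ‖if k = 1 then r1 ε z (s z) else r2 ε z (s z)‖ ≤ 2 := by
    filter_upwards [hbound] with z ⟨h1, h2⟩
    rcases hk with hk | hk <;> subst hk
    · simpa using h1
    · simpa using h2
  -- log of the chosen branch is bounded
  have hlogbd : ∀ᶠ z : ℂ in l,
      |Real.log (‖if k = 1 then r1 ε z (s z) else r2 ε z (s z)‖)|
        ≤ Real.log 2 := by
    filter_upwards [hbk] with z ⟨h1, h2⟩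
    rw [abs_le]
    constructor
    · have := Real.log_le_log (by norm_num : (0:ℝ) < 1/2) h1
      rw [show (1:ℝ)/2 = 2⁻¹ by norm_num, Real.log_inv] at this
      linarith
    · exact Real.log_le_log (by linarith) h2
  -- the second O(1) piece
  have hO2 : (fun z : ℂ =>
      Real.log (‖if k = 1 then r1 ε z (s z) else r2 ε z (s z)‖))
      =O[l] (fun _ => (1:ℝ)) := by
    rw [isBigO_one_iff]
    exact ⟨Real.log 2, by
      rw [eventually_map]
      simpa [Real.norm_eq_abs] using hlogbd⟩
  -- the first O(1) piece
  have hO1 : (fun z : ℂ => Real.log (‖z‖) - Real.log (‖z-1‖))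
      =O[l] (fun _ => (1:ℝ)) := by
    have hcont : ContinuousAt (fun w : ℂ => Real.log (‖w‖)) 1 := by
      apply (Real.continuousAt_log (by norm_num)).comp
      · exact continuous_norm.continuousAt
      -- abs 1 = 1 ≠ 0
    have htd := hcont.tendsto.comp hq1
    simp only [Function.comp, norm_one, Real.log_one] at htd
    have htd2 : Tendsto (fun z : ℂ => Real.log (‖z‖)
        - Real.log (‖z-1‖)) l (nhds 0) := by
      refine htd.congr' ?_
      filter_upwards [hbasic] with z ⟨hz0, hz1, hu1⟩
      simp only [Function.comp_apply]
      rw [norm_div, Real.log_div (norm_ne_zero_iff.2 hz0) (norm_ne_zero_iff.2 hz1)]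
    exact htd2.isBigO_one ℝ
  -- assemble
  have heq : (fun z : ℂ =>
        (y + 1) * Real.log (‖z‖) - Real.log (‖z - 1‖)
          + (1/2 - x) * Real.log (‖if k = 1 then r1 ε z (s z) else r2 ε z (s z)‖)
          - y * Real.log (‖z‖))
      = fun z : ℂ => (Real.log (‖z‖) - Real.log (‖z-1‖))
          + (1/2 - x) * Real.log (‖if k = 1 then r1 ε z (s z) else r2 ε z (s z)‖) := by
    funext z; ring
  rw [heq]
  exact hO1.add (hO2.const_mul_left _)
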